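/- A signed graph Γ = (G, σ) is odd-exchangeable (there exists an automorphism φ of G mapping the positive odd 2-regular subgraphs bijectively onto the negative odd 2-regular subgraphs and preserving the set of positive even 2-regular subgraphs) if and only if Γ is sign-symmetric (switching isomorphic to its negation −Γ). -/

import Mathlib

open scoped Classical
open Polynomial

/-!
If `φ` is an automorphism of `G`, then `B ↦ φ B` permutes the two-regular subgraphs of each parity,
so odd-exchangeability says exactly that `σ(φ B) = (-1)^n σ(B)` for every two-regular `B` with `n`
vertices (and hence `n` edges). Switching does not change `σ(B)`, because every vertex of `B` has even
degree, while negation multiplies it by `(-1)^n`; so a switching isomorphism from `Γ` to `-Γ` is such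
a `φ`. Conversely, for such a `φ` the edge function `δ(e) = -σ(φ e) σ(e)` has product one around every
cycle, hence around every closed walk, so it is a coboundary `δ(uv) = ε(u) ε(v)`, and `φ` carries `Γ`
to `-Γ` switched at `φ {ε = -1}`.
-/

structure SignedGraph (V : Type*) where
  G : SimpleGraph V
  sgn : V → V → ℤ
  symm : ∀ u v, sgn u v = sgn v u
  pm : ∀ u v, G.Adj u v → sgn u v = 1 ∨ sgn u v = -1
  zero : ∀ u v, ¬ G.Adj u v → sgn u v = 0

namespace SignedGraph

variable {V : Type*}

/-- The (real) adjacency matrix of a signed graph. -/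
noncomputable def adjMatrix [Fintype V] (Γ : SignedGraph V) : Matrix V V ℝ :=
  fun u v => (Γ.sgn u v : ℝ)

/-- Switching with respect to a vertex subset `U`. -/
noncomputable def switch (Γ : SignedGraph V) (U : Set V) : SignedGraph V where
  G := Γ.G
  sgn u v := if ((u ∈ U) ↔ (v ∈ U)) then Γ.sgn u v else -Γ.sgn u v
  symm u v := by
    try dsimp only
    by_cases h : (u ∈ U) ↔ (v ∈ U)
    · rw [if_pos h, if_pos (Iff.symm h), Γ.symm u v]
    · rw [if_neg h, if_neg (fun hh => h (Iff.symm hh)), Γ.symm u v]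
  pm u v hadj := by
    by_cases h : (u ∈ U) ↔ (v ∈ U)
    · simpa [h] using Γ.pm u v hadj
    · rcases Γ.pm u v hadj with h1 | h1 <;> simp [h, h1]
  zero u v hadj := by
    by_cases h : (u ∈ U) ↔ (v ∈ U) <;> simp [h, Γ.zero u v hadj]

/-- The sign function on unordered pairs. -/
def sgnE (Γ : SignedGraph V) : Sym2 V → ℤ := Sym2.lift ⟨Γ.sgn, Γ.symm⟩

/-- The spectrum of `Γ` is symmetric with respect to the origin. -/
def SymmetricSpectrum [Fintype V] [DecidableEq V] (Γ : SignedGraph V) : Prop :=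
  ∀ x : ℝ, Γ.adjMatrix.charpoly.rootMultiplicity x =
    Γ.adjMatrix.charpoly.rootMultiplicity (-x)

/-- The negation `-Γ = (G, -σ)`. -/
noncomputable def neg (Γ : SignedGraph V) : SignedGraph V where
  G := Γ.G
  sgn u v := -Γ.sgn u v
  symm u v := by (try dsimp only); rw [Γ.symm u v]
  pm u v h := by rcases Γ.pm u v h with h1 | h1 <;> simp [h1]
  zero u v h := by simp [Γ.zero u v h]

/-- `Γ` is sign-symmetric: switching isomorphic to its negation `-Γ`. -/
def SignSymmetric (Γ : SignedGraph V) : Prop :=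
  ∃ (U : Set V) (f : Γ.G ≃g Γ.G), ∀ u v, ((Γ.neg).switch U).sgn (f u) (f v) = Γ.sgn u v

/-- `B` is a (nonempty) 2-regular subgraph of `G`: a disjoint union of cycles. -/
def IsTwoRegular (Γ : SignedGraph V) (B : Γ.G.Subgraph) : Prop :=
  B.verts.Nonempty ∧ ∀ v ∈ B.verts, (B.neighborSet v).ncard = 2

/-- The product of the signs of all edges of a subgraph. -/
noncomputable def sgnProd (Γ : SignedGraph V) (B : Γ.G.Subgraph) : ℤ :=
  ∏ᶠ e ∈ B.edgeSet, Γ.sgnE e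

/-- The number of connected components of a subgraph. -/
noncomputable def ncomp (Γ : SignedGraph V) (B : Γ.G.Subgraph) : ℕ :=
  Nat.card B.coe.ConnectedComponent

/-- `Γ` is odd-exchangeable: some automorphism of `G` maps the positive odd 2-regular
subgraphs onto the negative ones and preserves the positive even 2-regular subgraphs. -/
def OddExchangeable [Fintype V] (Γ : SignedGraph V) : Prop :=
  ∃ φ : Γ.G ≃g Γ.G,
    (fun B : Γ.G.Subgraph => B.map φ.toHom) ''
        {B | Γ.IsTwoRegular B ∧ Odd B.verts.ncard ∧ Γ.sgnProd B = 1} =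
      {B | Γ.IsTwoRegular B ∧ Odd B.verts.ncard ∧ Γ.sgnProd B = -1} ∧
    (fun B : Γ.G.Subgraph => B.map φ.toHom) ''
        {B | Γ.IsTwoRegular B ∧ Even B.verts.ncard ∧ Γ.sgnProd B = 1} =
      {B | Γ.IsTwoRegular B ∧ Even B.verts.ncard ∧ Γ.sgnProd B = 1}

end SignedGraph

namespace SimpleGraph

variable {V M : Type*} [CommMonoid M] {G : SimpleGraph V} {δ : Sym2 V → M}

namespace Walk

/- A path closed up by one edge is a cycle or a backtrack `u v u`; these are the detours that
`bypass` cuts out. -/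
theorem prod_edges_cons_eq_one_of_isPath
    (hsq : ∀ u v, G.Adj u v → δ s(u, v) * δ s(u, v) = 1)
    (hcyc : ∀ a (c : G.Walk a a), c.IsCycle → (c.edges.map δ).prod = 1)
    {u v : V} (h : G.Adj u v) {p : G.Walk v u} (hp : p.IsPath) :
    ((cons h p).edges.map δ).prod = 1 := by
  by_cases he : s(u, v) ∈ p.edges
  · rw [hp.eq_adj_toWalk_of_mem_edges (Sym2.eq_swap ▸ he)]
    simpa [Sym2.eq_swap] using hsq u v h
  · exact hcyc u _ ((cons_isCycle_iff p h).mpr ⟨hp, he⟩)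

theorem prod_edges_bypass
    (hsq : ∀ u v, G.Adj u v → δ s(u, v) * δ s(u, v) = 1)
    (hcyc : ∀ a (c : G.Walk a a), c.IsCycle → (c.edges.map δ).prod = 1)
    {u v : V} (p : G.Walk u v) : (p.bypass.edges.map δ).prod = (p.edges.map δ).prod := by
  induction p with
  | nil => rfl
  | @cons u w v h p ih =>
    simp only [bypass]
    split_ifs with hs
    · have hsplit := congrArg (fun q => (q.edges.map δ).prod) (p.bypass.take_spec hs)
      have hloop := prod_edges_cons_eq_one_of_isPath hsq hcyc h
        ((bypass_isPath p).takeUntil hs)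
      simp only [edges_append, edges_cons, List.map_append, List.map_cons, List.prod_append,
        List.prod_cons] at hsplit hloop ⊢
      rw [← ih, ← hsplit, ← mul_assoc, hloop, one_mul]
    · simp [ih]

theorem prod_edges_eq_one_of_forall_isCycle
    (hsq : ∀ u v, G.Adj u v → δ s(u, v) * δ s(u, v) = 1)
    (hcyc : ∀ a (c : G.Walk a a), c.IsCycle → (c.edges.map δ).prod = 1)
    {u : V} (p : G.Walk u u) : (p.edges.map δ).prod = 1 := by
  rw [← p.prod_edges_bypass hsq hcyc, (isPath_iff_nil.mp p.bypass_isPath).eq_nil]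
  rfl

theorem prod_edges_eq_finprod {u v : V} {p : G.Walk u v} (hp : p.edges.Nodup)
    (f : Sym2 V → M) : (p.edges.map f).prod = ∏ᶠ e ∈ p.toSubgraph.edgeSet, f e := by
  rw [edgeSet_toSubgraph, edgeSet, ← List.coe_toFinset, finprod_mem_coe_finset,
    List.prod_toFinset f hp]

end Walk

theorem exists_potential_of_forall_isCycle
    (hsq : ∀ u v, G.Adj u v → δ s(u, v) * δ s(u, v) = 1)
    (hcyc : ∀ a (c : G.Walk a a), c.IsCycle → (c.edges.map δ).prod = 1) :
    ∃ ε : V → M, (∀ v, ε v * ε v = 1) ∧ ∀ u v, G.Adj u v → δ s(u, v) = ε u * ε v := by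
  have hclosed {a : V} (p : G.Walk a a) := p.prod_edges_eq_one_of_forall_isCycle hsq hcyc
  let root (v : V) : V := (G.connectedComponentMk v).out
  have hroot (v : V) : G.Reachable (root v) v := ConnectedComponent.exact (Quot.out_eq _)
  let walk (v : V) : G.Walk (root v) v := (hroot v).some
  set ε : V → M := fun v => ((walk v).edges.map δ).prod
  have hε (v : V) : ε v * ε v = 1 := by simpa using hclosed ((walk v).append (walk v).reverse)
  refine ⟨ε, hε, fun u v h => ?_⟩
  have hr : root v = root u := congrArg Quot.out (ConnectedComponent.sound h.reachable).symm
  have huv := hclosed ((walk u).append ((Walk.cons h (walk v).reverse).copy rfl hr))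
  simp only [Walk.edges_append, Walk.edges_reverse, Walk.edges_copy, Walk.edges_cons,
    List.map_append, List.map_reverse, List.map_cons, List.prod_append, List.prod_reverse,
    List.prod_cons] at huv
  calc δ s(u, v) = δ s(u, v) * (ε u * ε u) * (ε v * ε v) := by rw [hε, hε, mul_one, mul_one]
    _ = ε u * ε v * (ε u * (δ s(u, v) * ε v)) := by ac_rfl
    _ = ε u * ε v := by rw [huv, mul_one]

theorem prod_edgeFinset_lift_mul [Fintype V] (f : V → M) :
    ∏ e ∈ G.edgeFinset, Sym2.lift ⟨fun u v => f u * f v, fun _ _ => mul_comm _ _⟩ e =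
      ∏ v, f v ^ G.degree v := by
  have hedge : ∀ e ∈ G.edgeFinset,
      ∏ d ∈ Finset.univ.filter (fun d : G.Dart => d.edge = e), f d.fst =
        Sym2.lift ⟨fun u v => f u * f v, fun _ _ => mul_comm _ _⟩ e := by
    intro e he
    induction e using Sym2.ind with | _ u v
    let d : G.Dart := ⟨(u, v), G.mem_edgeFinset.mp he⟩
    rw [show s(u, v) = d.edge from rfl, d.edge_fiber, Finset.prod_pair d.symm_ne.symm]
    rfl
  have hvert : ∀ v, ∏ d ∈ Finset.univ.filter (fun d : G.Dart => d.fst = v), f d.fst =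
      f v ^ G.degree v := by
    intro v
    rw [Finset.prod_congr rfl fun d hd => congrArg f (Finset.mem_filter.mp hd).2,
      Finset.prod_const]
    congr 1
    convert G.dart_fst_fiber_card_eq_degree v
  rw [← Finset.prod_congr rfl hedge, ← Finset.prod_congr rfl fun v _ => hvert v,
    Finset.prod_fiberwise_of_maps_to fun d _ => G.mem_edgeFinset.mpr d.edge_mem]
  exact (Finset.prod_fiberwise _ _ _).symm

def Iso.mapSubgraph {W : Type*} {G' : SimpleGraph W} (φ : G ≃g G') :
    G.Subgraph ≃ G'.Subgraph where
  toFun B := B.map φ.toHom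
  invFun B := B.map φ.symm.toHom
  left_inv B := by dsimp only; rw [← Subgraph.map_comp, φ.symm_toHom_comp_toHom, Subgraph.map_id]
  right_inv B := by dsimp only; rw [← Subgraph.map_comp, φ.toHom_comp_symm_toHom, Subgraph.map_id]

namespace Subgraph

theorem neighborSet_map_of_injective {W : Type*} {G' : SimpleGraph W} {f : G →g G'}
    (hf : Function.Injective f) (B : G.Subgraph) (v : V) :
    (B.map f).neighborSet (f v) = f '' B.neighborSet v := by
  ext w
  simp [Relation.Map, hf.eq_iff]

theorem ncard_neighborSet_eq_ite {B : G.Subgraph}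
    (hB : ∀ v ∈ B.verts, (B.neighborSet v).ncard = 2) (v : V) :
    (B.neighborSet v).ncard = if v ∈ B.verts then 2 else 0 := by
  split_ifs with hv
  · exact hB v hv
  · have : B.neighborSet v = ∅ := Set.eq_empty_of_forall_notMem fun _ hw => hv (B.edge_vert hw)
    rw [this, Set.ncard_empty]

variable [Fintype V]

theorem finprod_edgeSet_eq_prod_edgeFinset (B : G.Subgraph) (f : Sym2 V → M) :
    ∏ᶠ e ∈ B.edgeSet, f e = ∏ e ∈ B.spanningCoe.edgeFinset, f e := by
  rw [← B.edgeSet_spanningCoe, finprod_mem_eq_toFinset_prod]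
  rfl

theorem degree_spanningCoe_eq_ncard (B : G.Subgraph) (v : V) :
    B.spanningCoe.degree v = (B.neighborSet v).ncard := by
  rw [degree_spanningCoe, degree, ← Nat.card_eq_fintype_card, Nat.card_coe_set_eq]

theorem card_edgeFinset_spanningCoe {B : G.Subgraph}
    (hB : ∀ v ∈ B.verts, (B.neighborSet v).ncard = 2) :
    B.spanningCoe.edgeFinset.card = B.verts.ncard := by
  have := B.spanningCoe.sum_degrees_eq_twice_card_edges
  simp only [degree_spanningCoe_eq_ncard, ncard_neighborSet_eq_ite hB] at this
  rw [Finset.sum_ite, Finset.sum_const_zero, Finset.sum_const, smul_eq_mul, add_zero,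
    Set.filter_mem_univ_eq_toFinset, ← Set.ncard_eq_toFinset_card'] at this
  omega

theorem finprod_edgeSet_const {B : G.Subgraph}
    (hB : ∀ v ∈ B.verts, (B.neighborSet v).ncard = 2) (c : M) :
    ∏ᶠ _ ∈ B.edgeSet, c = c ^ B.verts.ncard := by
  rw [finprod_edgeSet_eq_prod_edgeFinset, Finset.prod_const, card_edgeFinset_spanningCoe hB]

theorem finprod_edgeSet_lift_mul_eq_one {B : G.Subgraph}
    (hB : ∀ v, Even (B.neighborSet v).ncard) {f : V → M} (hf : ∀ v, f v * f v = 1) :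
    ∏ᶠ e ∈ B.edgeSet, Sym2.lift ⟨fun u v => f u * f v, fun _ _ => mul_comm _ _⟩ e = 1 := by
  rw [finprod_edgeSet_eq_prod_edgeFinset, prod_edgeFinset_lift_mul]
  refine Finset.prod_eq_one fun v _ => ?_
  obtain ⟨k, hk⟩ := hB v
  rw [degree_spanningCoe_eq_ncard, hk, ← two_mul, pow_mul, sq, hf, one_pow]

end Subgraph

end SimpleGraph

namespace SignedGraph

section

open SimpleGraph

variable {V : Type*} (Γ : SignedGraph V)

@[simp]
theorem sgnE_mk (u v : V) : Γ.sgnE s(u, v) = Γ.sgn u v := rfl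

theorem sgn_mul_self {u v : V} (h : Γ.G.Adj u v) : Γ.sgn u v * Γ.sgn u v = 1 := by
  rcases Γ.pm u v h with h | h <;> simp [h]

theorem sgnE_mul_self {e : Sym2 V} (he : e ∈ Γ.G.edgeSet) : Γ.sgnE e * Γ.sgnE e = 1 := by
  induction e using Sym2.ind with | _ u v => exact Γ.sgn_mul_self he

theorem sgnProd_mul_self (B : Γ.G.Subgraph) : Γ.sgnProd B * Γ.sgnProd B = 1 :=
  finprod_mem_induction (fun x => x * x = 1) (mul_one 1)
    (fun x y hx hy => by rw [mul_mul_mul_comm, hx, hy, mul_one])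
    (fun _ he => Γ.sgnE_mul_self (B.edgeSet_subset he))

theorem sgnProd_eq_one_or_neg_one (B : Γ.G.Subgraph) : Γ.sgnProd B = 1 ∨ Γ.sgnProd B = -1 :=
  Int.eq_one_or_neg_one_of_mul_eq_one (Γ.sgnProd_mul_self B)

theorem sgnProd_map (φ : Γ.G ≃g Γ.G) (B : Γ.G.Subgraph) :
    Γ.sgnProd (B.map φ.toHom) = ∏ᶠ e ∈ B.edgeSet, Γ.sgnE (Sym2.map φ e) := by
  rw [sgnProd, Subgraph.edgeSet_map]
  exact finprod_mem_image (Sym2.map.injective φ.injective).injOn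

theorem neg_switch_sgn (U : Set V) (u v : V) :
    (Γ.neg.switch U).sgn u v =
      -((if u ∈ U then -1 else 1) * (if v ∈ U then -1 else 1) * Γ.sgn u v) := by
  by_cases hu : u ∈ U <;> by_cases hv : v ∈ U <;> simp [switch, neg, hu, hv]

variable {Γ}

theorem IsTwoRegular.map {B : Γ.G.Subgraph} (hB : Γ.IsTwoRegular B) (φ : Γ.G ≃g Γ.G) :
    Γ.IsTwoRegular (B.map φ.toHom) := by
  refine ⟨hB.1.image _, ?_⟩
  rintro _ ⟨v, hv, rfl⟩
  rw [Subgraph.neighborSet_map_of_injective φ.injective]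
  exact (Set.ncard_image_of_injective _ φ.injective).trans (hB.2 v hv)

theorem ncard_verts_map (φ : Γ.G ≃g Γ.G) (B : Γ.G.Subgraph) :
    (B.map φ.toHom).verts.ncard = B.verts.ncard :=
  Set.ncard_image_of_injective _ φ.injective

theorem isTwoRegular_toSubgraph {a : V} {c : Γ.G.Walk a a} (hc : c.IsCycle) :
    Γ.IsTwoRegular c.toSubgraph :=
  ⟨⟨a, c.start_mem_verts_toSubgraph⟩, fun _ hv =>
    hc.ncard_neighborSet_toSubgraph_eq_two (c.mem_verts_toSubgraph.mp hv)⟩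

theorem IsTwoRegular.finprod_neg_mul [Fintype V] {B : Γ.G.Subgraph} (hB : Γ.IsTwoRegular B)
    (x y : Sym2 V → ℤ) :
    ∏ᶠ e ∈ B.edgeSet, -(x e * y e) =
      (-1) ^ B.verts.ncard * ((∏ᶠ e ∈ B.edgeSet, x e) * ∏ᶠ e ∈ B.edgeSet, y e) := by
  have hfin := B.edgeSet.toFinite
  simp_rw [neg_eq_neg_one_mul (x _ * y _)]
  rw [finprod_mem_mul_distrib hfin, finprod_mem_mul_distrib hfin,
    Subgraph.finprod_edgeSet_const hB.2]

variable (Γ) in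
def IsOddExchange (φ : Γ.G ≃g Γ.G) : Prop :=
  ∀ B, Γ.IsTwoRegular B → Γ.sgnProd (B.map φ.toHom) = (-1) ^ B.verts.ncard * Γ.sgnProd B

theorem IsOddExchange.image_setOf {φ : Γ.G ≃g Γ.G} (h : Γ.IsOddExchange φ) {p : ℕ → Prop}
    {s t : ℤ} (hst : ∀ n, p n → t = (-1) ^ n * s) :
    (fun B : Γ.G.Subgraph => B.map φ.toHom) ''
        {B | Γ.IsTwoRegular B ∧ p B.verts.ncard ∧ Γ.sgnProd B = s} =
      {B | Γ.IsTwoRegular B ∧ p B.verts.ncard ∧ Γ.sgnProd B = t} := by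
  ext C
  constructor
  · rintro ⟨B, ⟨hB, hp, hs⟩, rfl⟩
    exact ⟨hB.map φ, by rwa [ncard_verts_map], by rw [h B hB, hs, hst _ hp]⟩
  · rintro ⟨hC, hp, ht⟩
    have hC' : (C.map φ.symm.toHom).map φ.toHom = C := φ.mapSubgraph.apply_symm_apply C
    refine ⟨C.map φ.symm.toHom, ⟨hC.map φ.symm, by rwa [ncard_verts_map], ?_⟩, hC'⟩
    have hB := h _ (hC.map φ.symm)
    rw [hC', ht, hst _ hp, ncard_verts_map] at hB
    exact (mul_left_cancel₀ (pow_ne_zero _ (neg_ne_zero.mpr one_ne_zero)) hB).symm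

theorem oddExchangeable_iff_exists_isOddExchange [Fintype V] :
    Γ.OddExchangeable ↔ ∃ φ, Γ.IsOddExchange φ := by
  refine exists_congr fun φ => ⟨fun ⟨hodd, heven⟩ B hB => ?_, fun h => ⟨?_, ?_⟩⟩
  · have hmem {S T : Set Γ.G.Subgraph} (hST : (fun B => B.map φ.toHom) '' S = T) :
        B.map φ.toHom ∈ T ↔ B ∈ S :=
      hST ▸ φ.mapSubgraph.injective.mem_set_image
    have hB' := hB.map φ
    have hn := ncard_verts_map φ B
    rcases Γ.sgnProd_eq_one_or_neg_one B with hs | hs <;>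
      rcases Γ.sgnProd_eq_one_or_neg_one (B.map φ.toHom) with hs' | hs' <;>
      rcases Nat.even_or_odd B.verts.ncard with hpar | hpar
    all_goals
      have := hmem hodd
      have := hmem heven
      simp_all [hpar.neg_one_pow]
  · exact h.image_setOf fun n hn => by rw [hn.neg_one_pow, mul_one]
  · exact h.image_setOf fun n hn => by rw [hn.neg_one_pow, one_mul]

theorem isOddExchange_of_potential [Fintype V] {φ : Γ.G ≃g Γ.G} {ε : V → ℤ}
    (hε : ∀ v, ε v * ε v = 1)
    (h : ∀ u v, Γ.G.Adj u v → Γ.sgn (φ u) (φ v) = -(ε u * ε v * Γ.sgn u v)) :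
    Γ.IsOddExchange φ := by
  intro B hB
  have hedge : ∀ e ∈ B.edgeSet, Γ.sgnE (Sym2.map φ e) =
      -(Sym2.lift ⟨fun u v => ε u * ε v, fun _ _ => mul_comm _ _⟩ e * Γ.sgnE e) := by
    intro e he
    induction e using Sym2.ind with | _ u v => exact h u v (B.adj_sub he)
  have heven (v : V) : Even (B.neighborSet v).ncard := by
    rw [Subgraph.ncard_neighborSet_eq_ite hB.2]
    split_ifs <;> simp
  rw [sgnProd_map, finprod_mem_congr rfl hedge, hB.finprod_neg_mul,
    Subgraph.finprod_edgeSet_lift_mul_eq_one heven hε, one_mul]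
  rfl

theorem exists_potential_of_isOddExchange [Fintype V] {φ : Γ.G ≃g Γ.G}
    (h : Γ.IsOddExchange φ) : ∃ ε : V → ℤ, (∀ v, ε v * ε v = 1) ∧
      ∀ u v, Γ.G.Adj u v → Γ.sgn (φ u) (φ v) = -(ε u * ε v * Γ.sgn u v) := by
  set δ : Sym2 V → ℤ := fun e => -(Γ.sgnE (Sym2.map φ e) * Γ.sgnE e)
  have hsq (u v : V) (huv : Γ.G.Adj u v) : δ s(u, v) * δ s(u, v) = 1 := by
    simp only [δ, Sym2.map_mk, sgnE_mk]
    linear_combination Γ.sgn u v * Γ.sgn u v * Γ.sgn_mul_self (φ.map_adj_iff.mpr huv) +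
      Γ.sgn_mul_self huv
  have hcyc (a : V) (c : Γ.G.Walk a a) (hc : c.IsCycle) : (c.edges.map δ).prod = 1 := by
    have hC := isTwoRegular_toSubgraph hc
    have hpow : ((-1) ^ c.toSubgraph.verts.ncard * (-1) ^ c.toSubgraph.verts.ncard : ℤ) = 1 := by
      rw [← mul_pow]
      norm_num
    rw [c.prod_edges_eq_finprod hc.edges_nodup, hC.finprod_neg_mul, ← sgnProd_map, h _ hC,
      ← sgnProd]
    linear_combination Γ.sgnProd c.toSubgraph * Γ.sgnProd c.toSubgraph * hpow +
      Γ.sgnProd_mul_self c.toSubgraph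
  obtain ⟨ε, hε, hδ⟩ := Γ.G.exists_potential_of_forall_isCycle hsq hcyc
  refine ⟨ε, hε, fun u v huv => ?_⟩
  have := hδ u v huv
  simp only [δ, Sym2.map_mk, sgnE_mk] at this
  linear_combination -Γ.sgn u v * this - Γ.sgn (φ u) (φ v) * Γ.sgn_mul_self huv

theorem exists_neg_switch_iff_exists_potential (φ : Γ.G ≃g Γ.G) :
    (∃ U, ∀ u v, (Γ.neg.switch U).sgn (φ u) (φ v) = Γ.sgn u v) ↔
      ∃ ε : V → ℤ, (∀ v, ε v * ε v = 1) ∧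
        ∀ u v, Γ.G.Adj u v → Γ.sgn (φ u) (φ v) = -(ε u * ε v * Γ.sgn u v) := by
  constructor
  · rintro ⟨U, hU⟩
    refine ⟨fun v => if φ v ∈ U then -1 else 1, fun v => by dsimp only; split_ifs <;> norm_num,
      fun u v _ => ?_⟩
    dsimp only
    rw [← hU u v, neg_switch_sgn]
    split_ifs <;> ring
  · rintro ⟨ε, hε, h⟩
    have hmem (w : V) : (if φ w ∈ φ '' {v | ε v = -1} then -1 else 1) = ε w := by
      rw [φ.injective.mem_set_image, Set.mem_ofPred_eq]
      rcases Int.eq_one_or_neg_one_of_mul_eq_one (hε w) with hw | hw <;> simp [hw]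
    refine ⟨φ '' {v | ε v = -1}, fun u v => ?_⟩
    rw [neg_switch_sgn, hmem, hmem]
    by_cases huv : Γ.G.Adj u v
    · rw [h u v huv]
      linear_combination ε v * ε v * Γ.sgn u v * hε u + Γ.sgn u v * hε v
    · rw [Γ.zero u v huv, Γ.zero _ _ (φ.map_adj_iff.not.mpr huv)]
      ring

theorem isOddExchange_iff_exists_potential [Fintype V] (φ : Γ.G ≃g Γ.G) :
    Γ.IsOddExchange φ ↔ ∃ ε : V → ℤ, (∀ v, ε v * ε v = 1) ∧
      ∀ u v, Γ.G.Adj u v → Γ.sgn (φ u) (φ v) = -(ε u * ε v * Γ.sgn u v) :=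
  ⟨exists_potential_of_isOddExchange, fun ⟨_, hε, h⟩ => isOddExchange_of_potential hε h⟩

end

variable {V : Type*}

theorem oddExchangeable_iff_signSymmetric [Fintype V] (Γ : SignedGraph V) :
    Γ.OddExchangeable ↔ Γ.SignSymmetric := by
  rw [oddExchangeable_iff_exists_isOddExchange, SignSymmetric, exists_comm]
  exact exists_congr fun φ =>
    (isOddExchange_iff_exists_potential φ).trans (exists_neg_switch_iff_exists_potential φ).symm

end SignedGraph
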